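/- Reduction theorem: for each i with 2 ≤ i ≤ r and each set A_i ⊆ R with a ∈ A_i and |A_i| = i, whenever the quantities are defined (k+1 ≥ i−1 and the size constraints hold), f_{k+1,r}^{A_i} = f_{k,r}^{A_{i-1}} = f_{k-(i-2),r}^{{a}}, where A_{i-1} is any subset of R containing a with |A_{i-1}| = i−1. -/

import Mathlib

open Finset

/-- Fitch's parsimony operation: intersection if nonempty, otherwise union. -/
def fitchOp {α : Type*} [DecidableEq α] (B C : Finset α) : Finset α :=
  if (B ∩ C).Nonempty then B ∩ C else B ∪ C

/-- `fCS a R k A` is `f_{k,r}^A`: the minimum number of leaves of the fully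
bifurcating tree `T_k` that must be assigned state `a` in order for the Fitch
root state set to equal `A`, defined by the standard-decomposition recursion,
with base case `f_{0,r}^{{x}} = 1` if `x = a` and `0` otherwise. -/
noncomputable def fCS {α : Type*} [DecidableEq α] (a : α) (R : Finset α) :
    ℕ → Finset α → ℕ
  | 0, A => if a ∈ A then 1 else 0
  | (k+1), A => sInf {n : ℕ | ∃ B C : Finset α, B ⊆ R ∧ C ⊆ R ∧
      B.Nonempty ∧ C.Nonempty ∧ B.card ≤ 2 ^ k ∧ C.card ≤ 2 ^ k ∧
      fitchOp B C = A ∧ n = fCS a R k B + fCS a R k C}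

section FitchAux

variable {α : Type*} [DecidableEq α] (a : α) (R : Finset α)

lemma fitchOp_subset_union (B C : Finset α) : fitchOp B C ⊆ B ∪ C := by
  unfold fitchOp; split
  · exact inter_subset_union
  · exact Finset.Subset.rfl

lemma fitchOp_of_disjoint {B C : Finset α} (h : B ∩ C = ∅) : fitchOp B C = B ∪ C := by
  unfold fitchOp; rw [h]; simp

lemma fitchOp_self (B : Finset α) (h : B.Nonempty) : fitchOp B B = B := by
  unfold fitchOp; rw [inter_self, if_pos h]

lemma fitchOp_of_inter_eq {B C A : Finset α} (h : B ∩ C = A) (hne : A.Nonempty) :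
    fitchOp B C = A := by
  unfold fitchOp; rw [h, if_pos hne]

lemma inter_eq_singleton_of_fitchOp {B C : Finset α} {a : α}
    (hBne : B.Nonempty) (hCne : C.Nonempty) (hop : fitchOp B C = {a}) :
    B ∩ C = {a} := by
  by_cases h : (B ∩ C).Nonempty
  · unfold fitchOp at hop; rwa [if_pos h] at hop
  · exfalso
    unfold fitchOp at hop; rw [if_neg h] at hop
    have hB : B = {a} :=
      (subset_singleton_iff.mp (hop ▸ subset_union_left)).resolve_left
        (nonempty_iff_ne_empty.mp hBne)
    have hC : C = {a} :=
      (subset_singleton_iff.mp (hop ▸ subset_union_right)).resolve_left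
        (nonempty_iff_ne_empty.mp hCne)
    exact h (by rw [hB, hC, inter_self]; exact singleton_nonempty a)

lemma inter_insert_eq {a : α} {D E : Finset α} (hDE : D ∩ E = ∅)
    (haD : a ∉ D) (haE : a ∉ E) : (insert a D) ∩ (insert a E) = {a} := by
  ext x
  simp only [mem_inter, mem_insert, mem_singleton]
  constructor
  · rintro ⟨hx1, hx2⟩
    rcases hx1 with rfl | hx1; · rfl
    rcases hx2 with rfl | hx2; · rfl
    have : x ∈ D ∩ E := mem_inter.mpr ⟨hx1, hx2⟩
    rw [hDE] at this
    exact absurd this (notMem_empty x)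
  · rintro rfl; exact ⟨Or.inl rfl, Or.inl rfl⟩

lemma exists_insert_part {a : α} {s : Finset α} (ha : a ∉ s) {n : ℕ}
    (hn : 1 ≤ n) (h : n - 1 ≤ s.card) :
    ∃ D, D ⊆ s ∧ a ∉ D ∧ (insert a D).card = n := by
  obtain ⟨D, hDs, hDc⟩ := s.exists_subset_card_eq h
  have haD : a ∉ D := fun hx => ha (hDs hx)
  exact ⟨D, hDs, haD, by rw [card_insert_of_notMem haD, hDc]; omega⟩

lemma fCS_succ_le {k : ℕ} {A B C : Finset α}
    (hB : B ⊆ R) (hC : C ⊆ R) (hBne : B.Nonempty) (hCne : C.Nonempty)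
    (hBc : B.card ≤ 2 ^ k) (hCc : C.card ≤ 2 ^ k) (hop : fitchOp B C = A) :
    fCS a R (k+1) A ≤ fCS a R k B + fCS a R k C :=
  Nat.sInf_le ⟨B, C, hB, hC, hBne, hCne, hBc, hCc, hop, rfl⟩

lemma fCS_succ_min {k : ℕ} {A B C : Finset α}
    (hB : B ⊆ R) (hC : C ⊆ R) (hBne : B.Nonempty) (hCne : C.Nonempty)
    (hBc : B.card ≤ 2 ^ k) (hCc : C.card ≤ 2 ^ k) (hop : fitchOp B C = A) :
    ∃ B' C' : Finset α, B' ⊆ R ∧ C' ⊆ R ∧ B'.Nonempty ∧ C'.Nonempty ∧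
      B'.card ≤ 2 ^ k ∧ C'.card ≤ 2 ^ k ∧ fitchOp B' C' = A ∧
      fCS a R (k+1) A = fCS a R k B' + fCS a R k C' := by
  have hmem : fCS a R k B + fCS a R k C ∈ {n : ℕ | ∃ B C : Finset α, B ⊆ R ∧ C ⊆ R ∧
      B.Nonempty ∧ C.Nonempty ∧ B.card ≤ 2 ^ k ∧ C.card ≤ 2 ^ k ∧
      fitchOp B C = A ∧ n = fCS a R k B + fCS a R k C} :=
    ⟨B, C, hB, hC, hBne, hCne, hBc, hCc, hop, rfl⟩
  obtain ⟨B', C', h1, h2, h3, h4, h5, h6, h7, h8⟩ := Nat.sInf_mem ⟨_, hmem⟩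
  exact ⟨B', C', h1, h2, h3, h4, h5, h6, h7, h8⟩

/-- every nonempty small enough `A` admits a decomposition with parts inside `A`. -/
lemma exists_decomp (k : ℕ) (A : Finset α) (hne : A.Nonempty)
    (hcard : A.card ≤ 2 ^ (k+1)) :
    ∃ B C : Finset α, B ⊆ A ∧ C ⊆ A ∧ B.Nonempty ∧ C.Nonempty ∧
      B.card ≤ 2 ^ k ∧ C.card ≤ 2 ^ k ∧ fitchOp B C = A := by
  have h1 : 1 ≤ A.card := Finset.one_le_card.mpr hne
  have hp : 1 ≤ 2 ^ k := Nat.one_le_two_pow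
  rcases eq_or_lt_of_le h1 with h1' | h2
  · exact ⟨A, A, Finset.Subset.rfl, Finset.Subset.rfl, hne, hne, by omega, by omega,
      fitchOp_self A hne⟩
  · obtain ⟨B, hBA, hBcard⟩ := A.exists_subset_card_eq
      (show A.card - A.card / 2 ≤ A.card by omega)
    refine ⟨B, A \ B, hBA, sdiff_subset, ?_, ?_, ?_, ?_, ?_⟩
    · rw [← Finset.card_pos, hBcard]; omega
    · rw [← Finset.card_pos, card_sdiff_of_subset hBA, hBcard]; omega
    · omega
    · rw [card_sdiff_of_subset hBA, hBcard]; omega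
    · rw [fitchOp_of_disjoint (inter_sdiff_self B A), union_sdiff_of_subset hBA]

lemma fCS_pos :
    ∀ k, ∀ A : Finset α, A ⊆ R → a ∈ A → A.card ≤ 2 ^ k → 1 ≤ fCS a R k A := by
  intro k
  induction k with
  | zero => intro A _ haA _; simp [fCS, haA]
  | succ k IH =>
    intro A hAR haA hcard
    obtain ⟨B, C, hBA, hCA, hBne, hCne, hBc, hCc, hop⟩ :=
      exists_decomp k A ⟨a, haA⟩ hcard
    obtain ⟨B', C', h1, h2, h3, h4, h5, h6, h7, h8⟩ :=
      fCS_succ_min a R (k := k) (hBA.trans hAR) (hCA.trans hAR) hBne hCne hBc hCc hop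
    have haBC : a ∈ B' ∪ C' := fitchOp_subset_union B' C' (h7 ▸ haA)
    rw [h8]
    rcases Finset.mem_union.mp haBC with h | h
    · have := IH B' h1 h h5; omega
    · have := IH C' h2 h h6; omega

lemma g_pos (haR : a ∈ R) (m : ℕ) : 1 ≤ fCS a R m {a} :=
  fCS_pos a R m {a} (singleton_subset_iff.mpr haR) (mem_singleton_self a)
    (by rw [card_singleton]; exact Nat.one_le_two_pow)

lemma g_zero : fCS a R 0 {a} = 1 := by simp [fCS]

lemma fCS_zero :
    ∀ k, ∀ A : Finset α, A ⊆ R → A.Nonempty → a ∉ A → A.card ≤ 2 ^ k →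
      fCS a R k A = 0 := by
  intro k
  induction k with
  | zero => intro A _ _ haA _; simp [fCS, haA]
  | succ k IH =>
    intro A hAR hne haA hcard
    obtain ⟨B, C, hBA, hCA, hBne, hCne, hBc, hCc, hop⟩ := exists_decomp k A hne hcard
    apply Nat.sInf_eq_zero.mpr
    left
    exact ⟨B, C, hBA.trans hAR, hCA.trans hAR, hBne, hCne, hBc, hCc, hop, by
      rw [IH B (hBA.trans hAR) hBne (fun h => haA (hBA h)) hBc,
          IH C (hCA.trans hAR) hCne (fun h => haA (hCA h)) hCc]⟩

lemma fitch_master (haR : a ∈ R) :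
    ∀ K : ℕ,
      (∀ A : Finset α, A ⊆ R → a ∈ A → A.card ≤ 2 ^ K →
        fCS a R K A = fCS a R (K - (A.card - 1)) {a}) ∧
      (∀ m, m < K → fCS a R m {a} ≤ fCS a R (m + 1) {a}) := by
  intro K
  induction K using Nat.strong_induction_on with
  | _ K IH =>
  have haRs : ({a} : Finset α) ⊆ R := singleton_subset_iff.mpr haR
  have mono : ∀ n, n < K → ∀ m, m ≤ n → fCS a R m {a} ≤ fCS a R n {a} := by
    intro n hn
    induction n with
    | zero => intro m hm; obtain rfl := Nat.le_zero.mp hm; exact le_rfl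
    | succ n ih =>
      intro m hm
      rcases eq_or_lt_of_le hm with rfl | h
      · exact le_rfl
      · exact le_trans (ih (by omega) m (by omega)) ((IH (n+1) hn).2 n (by omega))
  constructor
  · -- the closed form
    intro A hAR haA hcard
    rcases K with _ | k
    · -- K = 0
      have hA1 : A.card = 1 :=
        le_antisymm (by simpa using hcard) (Finset.one_le_card.mpr ⟨a, haA⟩)
      have hAa : A = {a} :=
        ((eq_of_subset_of_card_le (singleton_subset_iff.mpr haA)
          (by rw [hA1, card_singleton]))).symm
      rw [hAa]; simp
    · -- K = k+1
      rcases eq_or_lt_of_le (Finset.one_le_card.mpr ⟨a, haA⟩) with hj1 | hj2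
      · -- |A| = 1, so A = {a}
        have hAa : A = {a} :=
          ((eq_of_subset_of_card_le (singleton_subset_iff.mpr haA)
            (by rw [← hj1, card_singleton]))).symm
        rw [hAa]; simp
      · -- 2 ≤ |A|
        have hp : k < 2 ^ k := Nat.lt_two_pow_self (n := k)
        have hpow : 2 ^ (k+1) = 2 * 2 ^ k := by ring
        rw [hpow] at hcard
        set j := A.card with hj
        set m := min (j - 1) (2 ^ k) with hm
        -- upper bound construction
        obtain ⟨D, hD, haD, hBcard⟩ :=
          exists_insert_part (notMem_erase a A) (n := m)
            (by omega) (by rw [card_erase_of_mem haA]; omega)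
        set B := insert a D with hB
        have hDA : D ⊆ A := hD.trans (erase_subset a A)
        have hBA : B ⊆ A := insert_subset haA hDA
        set C := A \ B with hC
        have hCA : C ⊆ A := by rw [hC]; exact sdiff_subset
        have hCcard : C.card = j - m := by rw [hC, card_sdiff_of_subset hBA, hBcard]
        have hCne : C.Nonempty := by rw [← Finset.card_pos, hCcard]; omega
        have haC : a ∉ C := fun h => (mem_sdiff.mp h).2 (mem_insert_self a D)
        have hop : fitchOp B C = A := by
          rw [hC, fitchOp_of_disjoint (inter_sdiff_self B A), union_sdiff_of_subset hBA]
        have hCzero : fCS a R k C = 0 :=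
          fCS_zero a R k C (hCA.trans hAR) hCne haC (by omega)
        have hfB : fCS a R k B = fCS a R (k - (m - 1)) {a} := by
          have h := (IH k (by omega)).1 B (hBA.trans hAR) (mem_insert_self a D)
            (by omega)
          rwa [hBcard] at h
        have hidx : k - (m - 1) = (k + 1) - (j - 1) := by omega
        have hup : fCS a R (k+1) A ≤ fCS a R ((k+1) - (j-1)) {a} := by
          have h := fCS_succ_le a R (k := k) (hBA.trans hAR) (hCA.trans hAR)
            ⟨a, mem_insert_self a D⟩ hCne (by omega) (by omega) hop
          rw [hfB, hCzero, hidx] at h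
          simpa using h
        -- lower bound
        obtain ⟨B₁, C₁, h1, h2, h3, h4, h5, h6, h7, hval⟩ :=
          fCS_succ_min a R (k := k) (hBA.trans hAR) (hCA.trans hAR)
            ⟨a, mem_insert_self a D⟩ hCne (by omega) (by omega) hop
        have hlow : fCS a R ((k+1) - (j-1)) {a} ≤ fCS a R (k+1) A := by
          by_cases hint : (B₁ ∩ C₁).Nonempty
          · -- intersection case : A = B₁ ∩ C₁
            have hAeq : B₁ ∩ C₁ = A := by
              unfold fitchOp at h7; rwa [if_pos hint] at h7
            have hAB : A ⊆ B₁ := hAeq ▸ inter_subset_left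
            have hAC : A ⊆ C₁ := hAeq ▸ inter_subset_right
            have haB₁ : a ∈ B₁ := hAB haA
            have haC₁ : a ∈ C₁ := hAC haA
            have hjb : j ≤ B₁.card := card_le_card hAB
            have hjc : j ≤ C₁.card := card_le_card hAC
            have hfB₁ : fCS a R k B₁ = fCS a R (k - (B₁.card - 1)) {a} :=
              (IH k (by omega)).1 B₁ h1 haB₁ h5
            have hfC₁ : fCS a R k C₁ = fCS a R (k - (C₁.card - 1)) {a} :=
              (IH k (by omega)).1 C₁ h2 haC₁ h6
            set t := (k+1) - (j-1) with ht
            rcases Nat.eq_zero_or_pos t with ht0 | htpos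
            · rw [ht0, g_zero]
              calc 1 ≤ fCS a R (k - (B₁.card - 1)) {a} := g_pos a R haR _
                _ ≤ fCS a R k B₁ + fCS a R k C₁ := by rw [hfB₁]; exact Nat.le_add_right _ _
                _ = fCS a R (k+1) A := hval.symm
            · obtain ⟨t', ht'⟩ : ∃ t', t = t' + 1 := ⟨t - 1, by omega⟩
              have hpt : t' < 2 ^ t' := Nat.lt_two_pow_self (n := t')
              -- construct a decomposition of {a} at level t'
              have haBA : a ∉ B₁ \ A := fun h => (mem_sdiff.mp h).2 haA
              have haCA : a ∉ C₁ \ A := fun h => (mem_sdiff.mp h).2 haA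
              set b'' := min (B₁.card - (j - 1)) (2 ^ t') with hb''
              set c'' := min (C₁.card - (j - 1)) (2 ^ t') with hc''
              obtain ⟨D₁, hD₁, haD₁, hDcard₁⟩ :=
                exists_insert_part haBA (n := b'') (by omega)
                  (by rw [card_sdiff_of_subset hAB]; omega)
              obtain ⟨E₁, hE₁, haE₁, hEcard₁⟩ :=
                exists_insert_part haCA (n := c'') (by omega)
                  (by rw [card_sdiff_of_subset hAC]; omega)
              have hDE : D₁ ∩ E₁ = ∅ := by
                rw [eq_empty_iff_forall_notMem]
                intro x hx
                have hx1 := hD₁ (mem_inter.mp hx).1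
                have hx2 := hE₁ (mem_inter.mp hx).2
                have : x ∈ A := hAeq ▸ mem_inter.mpr ⟨(mem_sdiff.mp hx1).1, (mem_sdiff.mp hx2).1⟩
                exact (mem_sdiff.mp hx1).2 this
              have hBC'' : (insert a D₁) ∩ (insert a E₁) = {a} :=
                inter_insert_eq hDE haD₁ haE₁
              have hop'' : fitchOp (insert a D₁) (insert a E₁) = {a} :=
                fitchOp_of_inter_eq hBC'' (singleton_nonempty a)
              have hB''R : insert a D₁ ⊆ R :=
                insert_subset haR ((hD₁.trans sdiff_subset).trans h1)
              have hC''R : insert a E₁ ⊆ R :=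
                insert_subset haR ((hE₁.trans sdiff_subset).trans h2)
              have hle : fCS a R (t' + 1) {a} ≤
                  fCS a R t' (insert a D₁) + fCS a R t' (insert a E₁) :=
                fCS_succ_le a R (k := t') hB''R hC''R (insert_nonempty a D₁) (insert_nonempty a E₁)
                  (by omega) (by omega) hop''
              have ht'K : t' < k + 1 := by omega
              have hfB'' : fCS a R t' (insert a D₁) = fCS a R (t' - (b'' - 1)) {a} := by
                have h := (IH t' (by omega)).1 (insert a D₁) hB''R (mem_insert_self a D₁)
                  (by omega)
                rwa [hDcard₁] at h
              have hfC'' : fCS a R t' (insert a E₁) = fCS a R (t' - (c'' - 1)) {a} := by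
                have h := (IH t' (by omega)).1 (insert a E₁) hC''R (mem_insert_self a E₁)
                  (by omega)
                rwa [hEcard₁] at h
              have hbnd1 : fCS a R (t' - (b'' - 1)) {a} ≤ fCS a R (k - (B₁.card - 1)) {a} := by
                have : t' - (b'' - 1) = k - (B₁.card - 1) ∨ t' - (b'' - 1) = 0 := by omega
                rcases this with h | h
                · rw [h]
                · rw [h, g_zero]; exact g_pos a R haR _
              have hbnd2 : fCS a R (t' - (c'' - 1)) {a} ≤ fCS a R (k - (C₁.card - 1)) {a} := by
                have : t' - (c'' - 1) = k - (C₁.card - 1) ∨ t' - (c'' - 1) = 0 := by omega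
                rcases this with h | h
                · rw [h]
                · rw [h, g_zero]; exact g_pos a R haR _
              calc fCS a R t {a} = fCS a R (t' + 1) {a} := by rw [ht']
                _ ≤ fCS a R t' (insert a D₁) + fCS a R t' (insert a E₁) := hle
                _ = fCS a R (t' - (b'' - 1)) {a} + fCS a R (t' - (c'' - 1)) {a} := by
                    rw [hfB'', hfC'']
                _ ≤ fCS a R (k - (B₁.card - 1)) {a} + fCS a R (k - (C₁.card - 1)) {a} :=
                    Nat.add_le_add hbnd1 hbnd2
                _ = fCS a R k B₁ + fCS a R k C₁ := by rw [hfB₁, hfC₁]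
                _ = fCS a R (k+1) A := hval.symm
          · -- union case
            have h0 : B₁ ∩ C₁ = ∅ := not_nonempty_iff_eq_empty.mp hint
            have hAeq : B₁ ∪ C₁ = A := by rw [← fitchOp_of_disjoint h0, h7]
            have hcards : B₁.card + C₁.card = j := by
              rw [← card_union_of_disjoint (disjoint_iff_inter_eq_empty.mpr h0), hAeq]
            have hkey : ∀ X Y : Finset α, X ⊆ R → X.card ≤ 2 ^ k → a ∈ X →
                X.card + Y.card = j → 1 ≤ Y.card →
                fCS a R ((k+1) - (j-1)) {a} ≤ fCS a R k X + fCS a R k Y := by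
              intro X Y hXR hXc haX hsum hY1
              have hfX : fCS a R k X = fCS a R (k - (X.card - 1)) {a} :=
                (IH k (by omega)).1 X hXR haX hXc
              have hmx : fCS a R ((k+1) - (j-1)) {a} ≤ fCS a R (k - (X.card - 1)) {a} :=
                mono (k - (X.card - 1)) (by omega) _ (by omega)
              calc fCS a R ((k+1) - (j-1)) {a} ≤ fCS a R (k - (X.card - 1)) {a} := hmx
                _ = fCS a R k X := hfX.symm
                _ ≤ fCS a R k X + fCS a R k Y := Nat.le_add_right _ _
            have haBC : a ∈ B₁ ∪ C₁ := hAeq ▸ haA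
            rcases mem_union.mp haBC with h | h
            · rw [hval]
              exact hkey B₁ C₁ h1 h5 h hcards (Finset.one_le_card.mpr h4)
            · rw [hval, Nat.add_comm (fCS a R k B₁)]
              exact hkey C₁ B₁ h2 h6 h (by omega) (Finset.one_le_card.mpr h3)
        exact le_antisymm hup hlow
  · -- monotone step at K
    intro m hmK
    obtain ⟨B, C, h1, h2, h3, h4, h5, h6, h7, hval⟩ :=
      fCS_succ_min a R (k := m) haRs haRs (singleton_nonempty a) (singleton_nonempty a)
        (by rw [card_singleton]; exact Nat.one_le_two_pow)
        (by rw [card_singleton]; exact Nat.one_le_two_pow)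
        (fitchOp_self {a} (singleton_nonempty a))
    have hBCa : B ∩ C = {a} := inter_eq_singleton_of_fitchOp h3 h4 h7
    have haB : a ∈ B := (mem_inter.mp (hBCa ▸ mem_singleton_self a)).1
    have haC : a ∈ C := (mem_inter.mp (hBCa ▸ mem_singleton_self a)).2
    have hfB : fCS a R m B = fCS a R (m - (B.card - 1)) {a} :=
      (IH m hmK).1 B h1 haB h5
    have hfC : fCS a R m C = fCS a R (m - (C.card - 1)) {a} :=
      (IH m hmK).1 C h2 haC h6
    rcases m with _ | m'
    · have hB0 : fCS a R 0 B = 1 := by simp [fCS, haB]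
      rw [g_zero, hval, hB0]
      omega
    · have hpt : m' < 2 ^ m' := Nat.lt_two_pow_self (n := m')
      have hb1 : 1 ≤ B.card := Finset.one_le_card.mpr h3
      have hc1 : 1 ≤ C.card := Finset.one_le_card.mpr h4
      set b' := min B.card (2 ^ m') with hb'
      set c' := min C.card (2 ^ m') with hc'
      obtain ⟨D, hD, haD, hDcard⟩ :=
        exists_insert_part (notMem_erase a B) (n := b') (by omega)
          (by rw [card_erase_of_mem haB]; omega)
      obtain ⟨E, hE, haE, hEcard⟩ :=
        exists_insert_part (notMem_erase a C) (n := c') (by omega)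
          (by rw [card_erase_of_mem haC]; omega)
      have hDE : D ∩ E = ∅ := by
        rw [eq_empty_iff_forall_notMem]
        intro x hx
        have hx1 := hD (mem_inter.mp hx).1
        have hx2 := hE (mem_inter.mp hx).2
        have hxa : x ∈ ({a} : Finset α) :=
          hBCa ▸ mem_inter.mpr ⟨(mem_erase.mp hx1).2, (mem_erase.mp hx2).2⟩
        exact (mem_erase.mp hx1).1 (mem_singleton.mp hxa)
      have hBC' : (insert a D) ∩ (insert a E) = {a} := inter_insert_eq hDE haD haE
      have hop' : fitchOp (insert a D) (insert a E) = {a} :=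
        fitchOp_of_inter_eq hBC' (singleton_nonempty a)
      have hB'R : insert a D ⊆ R := insert_subset haR ((hD.trans (erase_subset a B)).trans h1)
      have hC'R : insert a E ⊆ R := insert_subset haR ((hE.trans (erase_subset a C)).trans h2)
      have hle : fCS a R (m' + 1) {a} ≤ fCS a R m' (insert a D) + fCS a R m' (insert a E) :=
        fCS_succ_le a R (k := m') hB'R hC'R (insert_nonempty a D) (insert_nonempty a E)
          (by omega) (by omega) hop'
      have hfB' : fCS a R m' (insert a D) = fCS a R (m' - (b' - 1)) {a} := by
        have h := (IH m' (by omega)).1 (insert a D) hB'R (mem_insert_self a D) (by omega)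
        rwa [hDcard] at h
      have hfC' : fCS a R m' (insert a E) = fCS a R (m' - (c' - 1)) {a} := by
        have h := (IH m' (by omega)).1 (insert a E) hC'R (mem_insert_self a E) (by omega)
        rwa [hEcard] at h
      have hm1 : fCS a R (m' - (b' - 1)) {a} ≤ fCS a R ((m' + 1) - (B.card - 1)) {a} :=
        mono ((m' + 1) - (B.card - 1)) (by omega) _ (by omega)
      have hm2 : fCS a R (m' - (c' - 1)) {a} ≤ fCS a R ((m' + 1) - (C.card - 1)) {a} :=
        mono ((m' + 1) - (C.card - 1)) (by omega) _ (by omega)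
      calc fCS a R (m' + 1) {a}
          ≤ fCS a R m' (insert a D) + fCS a R m' (insert a E) := hle
        _ = fCS a R (m' - (b' - 1)) {a} + fCS a R (m' - (c' - 1)) {a} := by rw [hfB', hfC']
        _ ≤ fCS a R ((m' + 1) - (B.card - 1)) {a} + fCS a R ((m' + 1) - (C.card - 1)) {a} :=
            Nat.add_le_add hm1 hm2
        _ = fCS a R (m' + 1) B + fCS a R (m' + 1) C := by rw [hfB, hfC]
        _ = fCS a R (m' + 1 + 1) {a} := hval.symm

end FitchAux

/-- reduction theorem:
f_{k+1,r}^{A_i} = f_{k,r}^{A_{i-1}} = f_{k-(i-2),r}^{{a}}. -/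
theorem stmt_5 {α : Type*} [DecidableEq α] (a : α) (R : Finset α)
    (hr : 2 ≤ R.card) (haR : a ∈ R) (k i : ℕ) (hi2 : 2 ≤ i) (hir : i ≤ R.card)
    (hki : i - 1 ≤ k + 1)
    (Ai Am : Finset α) (hAi : Ai ⊆ R) (haAi : a ∈ Ai) (hAicard : Ai.card = i)
    (hAm : Am ⊆ R) (haAm : a ∈ Am) (hAmcard : Am.card = i - 1)
    (hdef1 : i ≤ 2 ^ (k + 1)) (hdef2 : i - 1 ≤ 2 ^ k) :
    fCS a R (k + 1) Ai = fCS a R k Am ∧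
      fCS a R k Am = fCS a R (k - (i - 2)) {a} := by
  have h1 := (fitch_master a R haR (k + 1)).1 Ai hAi haAi (by rw [hAicard]; exact hdef1)
  have h2 := (fitch_master a R haR k).1 Am hAm haAm (by rw [hAmcard]; exact hdef2)
  rw [hAicard] at h1
  rw [hAmcard] at h2
  have e1 : (k + 1) - (i - 1) = k - (i - 2) := by omega
  have e2 : k - (i - 1 - 1) = k - (i - 2) := by omega
  rw [e1] at h1
  rw [e2] at h2
  exact ⟨h1.trans h2.symm, h2⟩
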